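/- Let w, w′ ∈ W with w ≤_B w′. Then w·c ⪯ w′·c for every c ∈ C̄+. -/

import Mathlib

open scoped InnerProductSpace Classical

noncomputable section

namespace SSV

variable {E : Type*} [NormedAddCommGroup E] [InnerProductSpace ℝ E]

/-- The coroot `α∨ = (2/‖α‖²)·α` of `α ∈ E`, under the identification of `E*` with `E`
via the inner product (a root `α` acts on `E` as the linear functional `y ↦ ⟪α,y⟫`). -/
def cv (α : E) : E := (2 / ⟪α, α⟫_ℝ) • α

/-- The linear functional `y ↦ ⟪α∨, y⟫ = 2⟪α,y⟫/‖α‖²`. -/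
def rootForm (α : E) : E →ₗ[ℝ] ℝ where
  toFun y := 2 / ⟪α, α⟫_ℝ * ⟪α, y⟫_ℝ
  map_add' y z := by rw [inner_add_right]; ring
  map_smul' c y := by
    simp only [RingHom.id_apply, smul_eq_mul, real_inner_smul_right]
    ring

/-- The orthogonal reflection `s_α : y ↦ y − α(y)·α∨` in the hyperplane `α = 0`. -/
def lrefl (α : E) : E ≃ₗ[ℝ] E :=
  if h : ⟪α, α⟫_ℝ = 0 then LinearEquiv.refl ℝ E
  else
    Module.reflection (f := rootForm α) (x := α)
      (by simp only [rootForm, LinearMap.coe_mk, AddHom.coe_mk]; field_simp)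

/-- The affine reflection `s_a : y ↦ y − a(y)·α∨` associated to the affine root
`a = (α, c)`, i.e. to the affine function `y ↦ α(y) + c = ⟪α,y⟫ + c` on `E`. -/
def aRefl (α : E) (c : ℝ) : E ≃ᵃ[ℝ] E :=
  (lrefl α).toAffineEquiv.trans (AffineEquiv.constVAdd ℝ E (-(c • cv α)))

/-- The translation `τ(μ) : y ↦ y + μ`. -/
def tr (μ : E) : E ≃ᵃ[ℝ] E := AffineEquiv.constVAdd ℝ E μ

/-- `η = χ_{ℤ_{>0}} − χ_{ℤ_{≤0}} : ℝ → {−1,0,1}`. -/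
def eta (x : ℝ) : ℤ :=
  if ∃ n : ℤ, x = (n : ℝ) then (if 0 < x then 1 else -1) else 0

/-- `sgn(ℓ) = ℓ/|ℓ|` for `ℓ ≠ 0`, and `sgn(0) = 1`. -/
def sgnz (l : ℤ) : ℤ := if 0 ≤ l then 1 else -1

/-- The alternating word `j j' j j' ⋯` of length `m`. -/
def altList {n : ℕ} (j j' : Fin n) (m : ℕ) : List (Fin n) :=
  (List.range m).map fun s => if s % 2 = 0 then j else j'

/-- Evaluation of the affine function `a = (α, c)` at `y`: `a(y) = α(y) + c`. -/
def aval (a : E × ℝ) (y : E) : ℝ := ⟪a.1, y⟫_ℝ + a.2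

/-- The contragredient action of `w` on affine roots: `(w·a)(y) = a(w⁻¹·y)`. -/
def wact (w : E ≃ᵃ[ℝ] E) (a : E × ℝ) : E × ℝ :=
  (w.linear a.1, a.2 - ⟪w.linear a.1, w 0⟫_ℝ)

/-- The relation `y ≺_α z`. -/
def precA (α : E) (y z : E) : Prop :=
  (∃ l : ℤ, y = aRefl α (l : ℝ) z) ∧
    (|⟪α, y⟫_ℝ| < |⟪α, z⟫_ℝ| ∨ (⟪α, y⟫_ℝ = -⟪α, z⟫_ℝ ∧ 0 < ⟪α, y⟫_ℝ))

/-- The data of a reduced irreducible finite root system `Φ0` realised in `E* ≅ E`,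
normalised so that long roots have squared length `2/m²`, together with a choice of
positive roots, simple roots `α_1, …, α_r`, and the corresponding highest root `φ`. -/
structure Data (E : Type*) [NormedAddCommGroup E] [InnerProductSpace ℝ E] where
  r : ℕ
  r_pos : 0 < r
  m : ℕ
  m_pos : 0 < m
  Φ0 : Finset E
  pos : Finset E
  simple : Fin r → E
  hroot : E
  root_ne_zero : ∀ α ∈ Φ0, α ≠ 0
  root_neg_mem : ∀ α ∈ Φ0, -α ∈ Φ0
  root_reduced : ∀ α ∈ Φ0, ∀ c : ℝ, c • α ∈ Φ0 → c = 1 ∨ c = -1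
  root_refl_mem : ∀ α ∈ Φ0, ∀ β ∈ Φ0, aRefl α 0 β ∈ Φ0
  root_crystal : ∀ α ∈ Φ0, ∀ β ∈ Φ0, ∃ n : ℤ, ⟪cv β, α⟫_ℝ = (n : ℝ)
  root_irred : ∀ A B : Set E, (Φ0 : Set E) = A ∪ B → A.Nonempty → B.Nonempty →
    (∀ a ∈ A, ∀ b ∈ B, ⟪a, b⟫_ℝ = 0) → False
  root_norm_le : ∀ α ∈ Φ0, ⟪α, α⟫_ℝ ≤ 2 / (m : ℝ) ^ 2
  root_norm_int : ∀ α ∈ Φ0, ∃ n : ℤ, (n : ℝ) * ⟪α, α⟫_ℝ = 2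
  pos_subset : pos ⊆ Φ0
  pos_dichotomy : ∀ α ∈ Φ0, (α ∈ pos ∧ -α ∉ pos) ∨ (α ∉ pos ∧ -α ∈ pos)
  simple_mem_pos : ∀ i, simple i ∈ pos
  simple_indep : LinearIndependent ℝ simple
  pos_nat_comb : ∀ α ∈ pos, ∃ n : Fin r → ℕ, α = ∑ i, (n i : ℝ) • simple i
  hroot_mem_pos : hroot ∈ pos
  hroot_long : ⟪hroot, hroot⟫_ℝ = 2 / (m : ℝ) ^ 2
  hroot_highest : ∀ α ∈ Φ0, ∃ n : Fin r → ℕ, hroot - α = ∑ i, (n i : ℝ) • simple i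

namespace Data

variable (D : Data E)

/-- The coroot lattice `Q∨`. -/
def Qv : AddSubgroup E := AddSubgroup.closure (cv '' (D.Φ0 : Set E))

/-- The simple affine roots `α_0 = (−φ, 1)` and `α_i = (α_i, 0)` (`1 ≤ i ≤ r`), as pairs
`(gradient, constant term)`. -/
def asimple : Fin (D.r + 1) → E × ℝ :=
  Fin.cases (-D.hroot, (1 : ℝ)) fun i => (D.simple i, (0 : ℝ))

/-- The simple reflections `s_0, …, s_r` of the affine Weyl group. -/
def sgen (j : Fin (D.r + 1)) : E ≃ᵃ[ℝ] E := aRefl (D.asimple j).1 (D.asimple j).2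

/-- `a = (α, c)` is an affine root iff `α ∈ Φ0` and `c ∈ ℤ`. -/
def IsAffRoot (a : E × ℝ) : Prop := a.1 ∈ D.Φ0 ∧ ∃ n : ℤ, a.2 = (n : ℝ)

/-- `a` is a positive affine root. -/
def IsPosAff (a : E × ℝ) : Prop :=
  D.IsAffRoot a ∧ (0 < a.2 ∨ (a.2 = 0 ∧ a.1 ∈ D.pos))

/-- The set of reflections `s_α`, `α ∈ Φ0`. -/
def reflSet : Set (E ≃ᵃ[ℝ] E) := {g | ∃ α ∈ D.Φ0, g = aRefl α 0}

/-- The set of translations `τ(μ)`, `μ ∈ Q∨`. -/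
def trSet : Set (E ≃ᵃ[ℝ] E) := {g | ∃ μ ∈ D.Qv, g = tr μ}

/-- The finite Weyl group `W0`, generated by the reflections `s_α`. -/
def W0 : Subgroup (E ≃ᵃ[ℝ] E) := Subgroup.closure D.reflSet

/-- The affine Weyl group `W = W0 ⋉ Q∨`. -/
def W : Subgroup (E ≃ᵃ[ℝ] E) := Subgroup.closure (D.reflSet ∪ D.trSet)

/-- The inversion set `Π(w) = Φ+ ∩ w⁻¹Φ−`. -/
def PiSet (w : E ≃ᵃ[ℝ] E) : Set (E × ℝ) :=
  {a | D.IsPosAff a ∧ ¬D.IsPosAff (wact w a)}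

/-- The length function `ℓ(w) := #Π(w)`. -/
def len (w : E ≃ᵃ[ℝ] E) : ℕ := (D.PiSet w).ncard

/-- The open fundamental alcove `C₊`. -/
def Cp : Set E := {y | ∀ α ∈ D.pos, 0 < ⟪α, y⟫_ℝ ∧ ⟪α, y⟫_ℝ < 1}

/-- The closed fundamental alcove `C̄₊`. -/
def Cbar : Set E := closure D.Cp

/-- The face `C^J` of `C̄₊` (for `J ⊊ {0,…,r}`). -/
def CJ (J : Set (Fin (D.r + 1))) : Set E :=
  {c | c ∈ D.Cbar ∧ ∀ j, aval (D.asimple j) c = 0 ↔ j ∈ J}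

/-- The orbit `O_c = W·c`. -/
def Orb (c : E) : Set E := {y | ∃ w ∈ D.W, w c = y}

/-- The unique point `c_y ∈ C̄₊` in the `W`-orbit of `y`. -/
def cpt (y : E) : E :=
  if h : ∃ c, c ∈ D.Cbar ∧ ∃ w ∈ D.W, w c = y then h.choose else 0

/-- The unique shortest element `w_y ∈ W` with `w_y · c_y = y`. -/
def wmin (y : E) : E ≃ᵃ[ℝ] E :=
  if h : ∃ w, (w ∈ D.W ∧ w (D.cpt y) = y) ∧
      ∀ u, u ∈ D.W → u (D.cpt y) = y → D.len w ≤ D.len u then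
    h.choose
  else 1

/-- Reflections of the Coxeter system `(W, {s_0, …, s_r})`. -/
def IsCoxRefl (g : E ≃ᵃ[ℝ] E) : Prop := ∃ w ∈ D.W, ∃ j, g = w * D.sgen j * w⁻¹

/-- A single step in the Bruhat order. -/
def bstep (u v : E ≃ᵃ[ℝ] E) : Prop :=
  (∃ g, D.IsCoxRefl g ∧ v = g * u) ∧ D.len u < D.len v

/-- The Bruhat order `≤_B` of `(W, {s_0, …, s_r})`. -/
def bruhatLE : (E ≃ᵃ[ℝ] E) → (E ≃ᵃ[ℝ] E) → Prop := Relation.ReflTransGen D.bstep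

/-- The strict Bruhat order `<_B`. -/
def bruhatLT (u v : E ≃ᵃ[ℝ] E) : Prop := D.bruhatLE u v ∧ u ≠ v

/-- The parabolic Bruhat order `≤` on `E`: `y ≤ z` iff `y ∈ W·z` and `w_y ≤_B w_z`. -/
def paraLE (y z : E) : Prop :=
  (∃ w ∈ D.W, w z = y) ∧ D.bruhatLE (D.wmin y) (D.wmin z)

/-- The strict parabolic Bruhat order `<` on `E`. -/
def paraLT (y z : E) : Prop := D.paraLE y z ∧ y ≠ z

/-- The relation `≺`, the transitive closure of the `≺_α` (`α ∈ Φ0+`). -/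
def prec : E → E → Prop :=
  Relation.TransGen fun y z => ∃ α ∈ D.pos, precA α y z

/-- The relation `⪯`. -/
def precLE (y z : E) : Prop := D.prec y z ∨ y = z

/-- The parabolic subgroup `W_J` of `W`. -/
def WJ (J : Set (Fin (D.r + 1))) : Subgroup (E ≃ᵃ[ℝ] E) :=
  Subgroup.closure {g | ∃ j ∈ J, g = D.sgen j}

/-- The set `W^J` of minimal-length representatives of the cosets `W/W_J`. -/
def WminJ (J : Set (Fin (D.r + 1))) : Set (E ≃ᵃ[ℝ] E) :=
  {w | w ∈ D.W ∧ ∀ u ∈ D.WJ J, D.len w ≤ D.len (w * u)}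

/-- Dominant elements: `α(μ) ≥ 0` for all `α ∈ Φ0+`. -/
def IsDom (μ : E) : Prop := ∀ α ∈ D.pos, 0 ≤ ⟪α, μ⟫_ℝ

/-- `Π0(v) = Φ0+ ∩ v⁻¹Φ0−` for `v ∈ W0`. -/
def Pi0 (v : E ≃ᵃ[ℝ] E) : Finset E := D.pos.filter fun α => -(v.linear α) ∈ D.pos

/-- `χ = χ₊ − χ₋ : Φ0 → {±1}`. -/
def chi (α : E) : ℤ := if α ∈ D.pos then 1 else -1

end Data

/-- The character `𝔰_y : μ ↦ ∏_{α ∈ Φ0+} k_α^{η(α(y))·α(μ)}` (evaluated at points `μ` where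
all `α(μ)` are integers, e.g. on a lattice `Λ ∈ 𝓛`). -/
def sweight {F : Type*} [Field F] (D : Data E) (k : E → Fˣ) (y μ : E) : Fˣ :=
  ∏ α ∈ D.pos, k α ^ (eta ⟪α, y⟫_ℝ * ⌊⟪α, μ⟫_ℝ⌋)

/-- The action of `w ∈ W` on characters of `Q∨`: for `w = τ(ν)v`,
`(w·t)(μ) = q^{⟪ν,μ⟫}·t(v⁻¹μ)`. -/
def charAct {F : Type*} [Field F] (q : Fˣ) (w : E ≃ᵃ[ℝ] E) (t : E → Fˣ) : E → Fˣ :=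
  fun μ => q ^ ⌊⟪w 0, μ⟫_ℝ⌋ * t (w.linear.symm μ)

/-- `t` defines a multiplicative character of `Q∨`, i.e. an element of `T = Hom(Q∨, Fˣ)`. -/
def IsChar {F : Type*} [Field F] (D : Data E) (t : E → Fˣ) : Prop :=
  ∀ μ ∈ D.Qv, ∀ ν ∈ D.Qv, t (μ + ν) = t μ * t ν

/-- `q_α := q^{2/‖α‖²}`. -/
def qroot {F : Type*} [Field F] (q : Fˣ) (α : E) : Fˣ := q ^ ⌊2 / ⟪α, α⟫_ℝ⌋

/-- Membership in `T_J`: `t ∈ T` with `t^{α_i∨} = 1` for `i ∈ J ∩ {1,…,r}`, and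
`q_φ·t^{−φ∨} = 1` if `0 ∈ J`. -/
def InTJ {F : Type*} [Field F] (D : Data E) (q : Fˣ) (J : Set (Fin (D.r + 1)))
    (t : E → Fˣ) : Prop :=
  IsChar D t ∧ (∀ i : Fin D.r, i.succ ∈ J → t (cv (D.simple i)) = 1) ∧
    ((0 : Fin (D.r + 1)) ∈ J → qroot q D.hroot * t (-cv D.hroot) = 1)

/-- `κ_v(y) = ∏_{α ∈ Π0(v)} k_α^{−η(α(y))}`. -/
def kappa {F : Type*} [Field F] (D : Data E) (k : E → Fˣ) (v : E ≃ᵃ[ℝ] E) (y : E) : Fˣ :=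
  ∏ α ∈ D.Pi0 v, k α ^ (-eta ⟪α, y⟫_ℝ)

/-- The (quasi-)monomial `x^y`, as an element of `⊕_{z ∈ E} F x^z`. -/
def xmono (F : Type*) [Field F] (y : E) : E →₀ F := Finsupp.single y 1

/-- The multiplication operator `π(x^μ) : x^y ↦ x^{y+μ}`. -/
def xop (F : Type*) [Field F] (μ : E) : Module.End F (E →₀ F) :=
  Finsupp.lmapDomain F F (· + μ)

/-- The truncated divided difference `∇_i(x^y)` in its explicit form: with `n = ⌊α(y)⌋`,
`−(x^{y−α∨} + ⋯ + x^{y−nα∨})` if `n ≥ 1`, `0` if `n = 0`, and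
`x^y + x^{y+α∨} + ⋯ + x^{y+(−n−1)α∨}` if `n ≤ −1`. -/
def nablaS (F : Type*) [Field F] (α y : E) : E →₀ F :=
  if 1 ≤ ⌊⟪α, y⟫_ℝ⌋ then
    -∑ s ∈ Finset.Icc (1 : ℤ) ⌊⟪α, y⟫_ℝ⌋, Finsupp.single (y - (s : ℝ) • cv α) (1 : F)
  else
    ∑ s ∈ Finset.Icc (0 : ℤ) (-⌊⟪α, y⟫_ℝ⌋ - 1), Finsupp.single (y + (s : ℝ) • cv α) (1 : F)

/-- The truncated divided difference `∇_0(x^y)` in its explicit form: with `n = ⌊−φ(y)⌋`,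
`−(q_φ^{−1}x^{y+φ∨} + ⋯ + q_φ^{−n}x^{y+nφ∨})` if `n ≥ 1`, `0` if `n = 0`, and
`x^y + q_φ x^{y−φ∨} + ⋯ + q_φ^{−n−1}x^{y+(n+1)φ∨}` if `n ≤ −1`. -/
def nabla0 {F : Type*} [Field F] (D : Data E) (q : Fˣ) (y : E) : E →₀ F :=
  if 1 ≤ ⌊-⟪D.hroot, y⟫_ℝ⌋ then
    -∑ s ∈ Finset.Icc (1 : ℤ) ⌊-⟪D.hroot, y⟫_ℝ⌋,
      (((qroot q D.hroot : Fˣ) : F) ^ (-s)) • Finsupp.single (y + (s : ℝ) • cv D.hroot) (1 : F)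
  else
    ∑ s ∈ Finset.Icc (0 : ℤ) (-⌊-⟪D.hroot, y⟫_ℝ⌋ - 1),
      (((qroot q D.hroot : Fˣ) : F) ^ s) • Finsupp.single (y - (s : ℝ) • cv D.hroot) (1 : F)

/-- `k_j := k_{α_j}` (`0 ≤ j ≤ r`), with `k_0 = k_φ`. -/
def kgen {F : Type*} [Field F] (D : Data E) (k : E → Fˣ) : Fin (D.r + 1) → Fˣ :=
  Fin.cases (k D.hroot) fun i => k (D.simple i)

/-- The image of the monomial `x^y` under the truncated Demazure–Lusztig operator `π(T_j)`:
`π(T_i)x^y = k_i^{χ_ℤ(α_i(y))}x^{s_i y} + (k_i − k_i^{−1})∇_i(x^y)` for `1 ≤ i ≤ r`, and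
`π(T_0)x^y = k_0^{χ_ℤ(α_0(y))}𝔱_y^{φ∨}x^{s_φ y} + (k_0 − k_0^{−1})∇_0(x^y)`. -/
def Tfun {F : Type*} [Field F] (D : Data E) (q : Fˣ) (k t : E → Fˣ) :
    Fin (D.r + 1) → E → E →₀ F :=
  Fin.cases
    (fun y =>
      ((if ∃ n : ℤ, aval (D.asimple 0) y = (n : ℝ) then ((k D.hroot : Fˣ) : F) else 1) *
          ((charAct q (D.wmin y) t (cv D.hroot) : Fˣ) : F)) •
          Finsupp.single (aRefl D.hroot 0 y) (1 : F) +
        (((k D.hroot : Fˣ) : F) - (((k D.hroot)⁻¹ : Fˣ) : F)) • nabla0 D q y)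
    fun i y =>
      (if ∃ n : ℤ, ⟪D.simple i, y⟫_ℝ = (n : ℝ) then ((k (D.simple i) : Fˣ) : F) else 1) •
          Finsupp.single (aRefl (D.simple i) 0 y) (1 : F) +
        (((k (D.simple i) : Fˣ) : F) - (((k (D.simple i))⁻¹ : Fˣ) : F)) • nablaS F (D.simple i) y

/-- The truncated Demazure–Lusztig operator `π(T_j)` on `⊕_{y ∈ E} F x^y`. -/
def Top {F : Type*} [Field F] (D : Data E) (q : Fˣ) (k t : E → Fˣ) (j : Fin (D.r + 1)) :
    Module.End F (E →₀ F) :=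
  Finsupp.linearCombination F (Tfun D q k t j)

/-- `π(((1 − x^{−α(μ)α∨})/(1 − x^{α∨}))·x^μ)` applied to `x^y`: the finite geometric sum
appearing in the cross relation for `T_i`. -/
def crossS (F : Type*) [Field F] (α μ y : E) : E →₀ F :=
  if 1 ≤ ⌊⟪α, μ⟫_ℝ⌋ then
    -∑ s ∈ Finset.Icc (1 : ℤ) ⌊⟪α, μ⟫_ℝ⌋, Finsupp.single (y + μ - (s : ℝ) • cv α) (1 : F)
  else
    ∑ s ∈ Finset.Icc (0 : ℤ) (-⌊⟪α, μ⟫_ℝ⌋ - 1), Finsupp.single (y + μ + (s : ℝ) • cv α) (1 : F)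

/-- `π(((1 − (q_φ x^{−φ∨})^{φ(μ)})/(1 − q_φ x^{−φ∨}))·x^μ)` applied to `x^y`: the finite
geometric sum appearing in the cross relation for `T_0`. -/
def cross0 {F : Type*} [Field F] (D : Data E) (q : Fˣ) (μ y : E) : E →₀ F :=
  if 0 ≤ ⌊⟪D.hroot, μ⟫_ℝ⌋ then
    ∑ s ∈ Finset.Icc (0 : ℤ) (⌊⟪D.hroot, μ⟫_ℝ⌋ - 1),
      (((qroot q D.hroot : Fˣ) : F) ^ s) • Finsupp.single (y + μ - (s : ℝ) • cv D.hroot) (1 : F)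
  else
    -∑ s ∈ Finset.Icc (1 : ℤ) (-⌊⟪D.hroot, μ⟫_ℝ⌋),
      (((qroot q D.hroot : Fˣ) : F) ^ (-s)) • Finsupp.single (y + μ + (s : ℝ) • cv D.hroot) (1 : F)

/-- The quasi-monomial `x^y` in the model `Q^{(c)} ⊆ (E → Q)` of `Q ⊗_P P^{(c)}`:
`x^y` is the function `z ↦ x^{y−z}` supported on `y + Q∨`. -/
def xiQ {Q : Type*} [Field Q] (D : Data E) (mono : E → Q) (y : E) : E → Q :=
  fun z => if z - y ∈ D.Qv then mono (y - z) else 0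

/-- Membership in the model `Q^{(c)} ⊆ (E → Q)` of `Q ⊗_P P^{(c)}`: functions supported on
`O_c` satisfying the covariance `ξ(z + ν) = x^{−ν}·ξ(z)` (`ν ∈ Q∨`). -/
def IsQc {Q : Type*} [Field Q] (D : Data E) (mono : E → Q) (c : E) (ξ : E → Q) : Prop :=
  (∀ z, z ∉ D.Orb c → ξ z = 0) ∧
    ∀ z ∈ D.Orb c, ∀ ν ∈ D.Qv, ξ (z + ν) = (mono ν)⁻¹ * ξ z

/-- `x^{α_0∨} = q_φ x^{−φ∨}` as an element of `Q`. -/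
def xroot0 {F Q : Type*} [Field F] [Field Q] (D : Data E) (ι : F →+* Q) (q : Fˣ)
    (mono : E → Q) : Q :=
  ι ((qroot q D.hroot : Fˣ) : F) * mono (-cv D.hroot)

/-- The right-hand side of the defining formula for `σ(s_j)(x^y)`:
`(k_j^{χ_ℤ(α_j(y))}(x^{α_j∨} − 1)/(k_j x^{α_j∨} − k_j^{−1}))·s_{j,𝔱}x^y
 + ((k_j − k_j^{−1})/(k_j x^{α_j∨} − k_j^{−1}))·x^{y − ⌊Dα_j(y)⌋α_j∨}`. -/
def sigmaFormula {F Q : Type*} [Field F] [Field Q] (D : Data E) (ι : F →+* Q) (q : Fˣ)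
    (k t : E → Fˣ) (mono : E → Q) : Fin (D.r + 1) → E → E → Q :=
  Fin.cases
    (fun y =>
      (((if ∃ n : ℤ, aval (D.asimple 0) y = (n : ℝ) then ι ((k D.hroot : Fˣ) : F) else 1) *
            (xroot0 D ι q mono - 1)) /
          (ι ((k D.hroot : Fˣ) : F) * xroot0 D ι q mono - ι (((k D.hroot)⁻¹ : Fˣ) : F))) •
          (ι ((charAct q (D.wmin y) t (cv D.hroot) : Fˣ) : F) •
            xiQ D mono (aRefl D.hroot 0 y)) +
        ((ι ((k D.hroot : Fˣ) : F) - ι (((k D.hroot)⁻¹ : Fˣ) : F)) /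
          (ι ((k D.hroot : Fˣ) : F) * xroot0 D ι q mono - ι (((k D.hroot)⁻¹ : Fˣ) : F))) •
          (ι (((qroot q D.hroot ^ (-⌊-⟪D.hroot, y⟫_ℝ⌋) : Fˣ) : F)) •
            xiQ D mono (y + (⌊-⟪D.hroot, y⟫_ℝ⌋ : ℝ) • cv D.hroot)))
    fun i y =>
      (((if ∃ n : ℤ, ⟪D.simple i, y⟫_ℝ = (n : ℝ) then ι ((k (D.simple i) : Fˣ) : F) else 1) *
            (mono (cv (D.simple i)) - 1)) /
          (ι ((k (D.simple i) : Fˣ) : F) * mono (cv (D.simple i)) -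
            ι (((k (D.simple i))⁻¹ : Fˣ) : F))) •
          xiQ D mono (aRefl (D.simple i) 0 y) +
        ((ι ((k (D.simple i) : Fˣ) : F) - ι (((k (D.simple i))⁻¹ : Fˣ) : F)) /
          (ι ((k (D.simple i) : Fˣ) : F) * mono (cv (D.simple i)) -
            ι (((k (D.simple i))⁻¹ : Fˣ) : F))) •
          xiQ D mono (y - (⌊⟪D.simple i, y⟫_ℝ⌋ : ℝ) • cv (D.simple i))

end SSV

/-!
A Bruhat step is `u ↦ s_b u` with `b ∈ Φ⁺` and `ℓ(u) < ℓ(s_b u)`. This length inequality forces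
`u⁻¹ b ∈ Φ⁺`: otherwise induction on the length, using `ℓ(w s_j) = ℓ(w) ± 1` according as
`w α_j ∈ Φ^±` and the fact that `s_j` permutes `Φ⁺ ∖ {α_j}`, gives `ℓ(s_b u) < ℓ(u)`.
Positive affine roots are nonnegative on `C̄₊`, so `A := b(u·c) = (u⁻¹ b)(c) ≥ 0` and
`s_b(u·c) = u·c − A α∨`. Writing `b = (α, ℓ)` with `ℓ ≥ 0`, we get `α(u·c) = A − ℓ` and
`α(s_b u·c) = −A − ℓ`, which for `A > 0` is exactly `u·c ≺_{±α} s_b(u·c)`. Chaining the steps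
proves the theorem.
-/

namespace SSV

variable {E : Type*} [NormedAddCommGroup E] [InnerProductSpace ℝ E]

section Reflections

lemma apply_eq_linear_add_apply_zero (u : E ≃ᵃ[ℝ] E) (x : E) : u x = u.linear x + u 0 := by
  simpa using u.map_vadd 0 x

variable {α : E}

lemma inner_cv_self (hα : α ≠ 0) : ⟪α, cv α⟫_ℝ = 2 := by
  rw [cv, real_inner_smul_right]
  field_simp [inner_self_ne_zero.2 hα]

lemma cv_neg (α : E) : cv (-α) = -cv α := by
  simp [cv]

lemma aRefl_apply (hα : α ≠ 0) (c : ℝ) (y : E) :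
    aRefl α c y = y - (⟪α, y⟫_ℝ + c) • cv α := by
  rw [aRefl, AffineEquiv.trans_apply, AffineEquiv.constVAdd_apply, LinearEquiv.coe_toAffineEquiv,
    lrefl, dif_neg (inner_self_ne_zero.2 hα), Module.reflection_apply]
  simp only [rootForm, LinearMap.coe_mk, AddHom.coe_mk, cv, vadd_eq_add]
  module

lemma aRefl_linear_apply (hα : α ≠ 0) (c : ℝ) (x : E) :
    (aRefl α c).linear x = x - ⟪α, x⟫_ℝ • cv α := by
  have := apply_eq_linear_add_apply_zero (aRefl α c) x
  rw [aRefl_apply hα, aRefl_apply hα, inner_zero_right] at this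
  linear_combination (norm := module) -this

lemma aRefl_aRefl (hα : α ≠ 0) (c : ℝ) (y : E) : aRefl α c (aRefl α c y) = y := by
  rw [aRefl_apply hα, aRefl_apply hα, inner_sub_right, real_inner_smul_right, inner_cv_self hα]
  module

lemma aRefl_mul_self (hα : α ≠ 0) (c : ℝ) : aRefl α c * aRefl α c = 1 :=
  AffineEquiv.ext (aRefl_aRefl hα c)

lemma aRefl_inv (hα : α ≠ 0) (c : ℝ) : (aRefl α c)⁻¹ = aRefl α c :=
  inv_eq_of_mul_eq_one_right (aRefl_mul_self hα c)

lemma aRefl_neg (hα : α ≠ 0) (c : ℝ) : aRefl (-α) (-c) = aRefl α c := by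
  ext y
  rw [aRefl_apply (neg_ne_zero.2 hα), aRefl_apply hα, cv_neg, inner_neg_left]
  module

lemma inner_aRefl_linear (hα : α ≠ 0) (c : ℝ) (x y : E) :
    ⟪(aRefl α c).linear x, (aRefl α c).linear y⟫_ℝ = ⟪x, y⟫_ℝ := by
  have hcv (z : E) : ⟪cv α, z⟫_ℝ = 2 / ⟪α, α⟫_ℝ * ⟪α, z⟫_ℝ := real_inner_smul_left ..
  have hcv' (z : E) : ⟪z, cv α⟫_ℝ = 2 / ⟪α, α⟫_ℝ * ⟪α, z⟫_ℝ := by rw [real_inner_comm, hcv]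
  simp only [aRefl_linear_apply hα, inner_sub_left, inner_sub_right, real_inner_smul_left,
    real_inner_smul_right, hcv, hcv']
  field_simp [inner_self_ne_zero.2 hα]
  ring

end Reflections

lemma aval_injective : Function.Injective (aval : E × ℝ → E → ℝ) := by
  intro a b h
  have h2 : a.2 = b.2 := by simpa [aval] using congrFun h 0
  have h1 := congrFun h (a.1 - b.1)
  simp only [aval, h2, add_left_inj, ← sub_eq_zero (a := ⟪a.1, _⟫_ℝ), ← inner_sub_left,
    inner_self_eq_zero, sub_eq_zero] at h1
  exact Prod.ext h1 h2

lemma aval_wact {w : E ≃ᵃ[ℝ] E} (hw : ∀ x y : E, ⟪w.linear x, w.linear y⟫_ℝ = ⟪x, y⟫_ℝ)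
    (a : E × ℝ) (y : E) : aval (wact w a) y = aval a (w⁻¹ y) := by
  have hy : y = w.linear (w⁻¹ y) + w 0 := by
    rw [← apply_eq_linear_add_apply_zero]
    exact (w.apply_symm_apply y).symm
  conv_lhs => rw [hy]
  simp only [aval, wact, inner_add_right, hw]
  ring

lemma wact_neg (w : E ≃ᵃ[ℝ] E) (a : E × ℝ) : wact w (-a) = -wact w a := by
  refine Prod.ext (map_neg ..) ?_
  simp only [wact, Prod.snd_neg, Prod.fst_neg, map_neg, inner_neg_left]
  ring

def wactLinear (w : E ≃ᵃ[ℝ] E) : (E × ℝ) →ₗ[ℝ] E × ℝ where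
  toFun := wact w
  map_add' a b := by
    refine Prod.ext (map_add ..) ?_
    simp only [wact, Prod.fst_add, Prod.snd_add, map_add, inner_add_left]
    ring
  map_smul' r a := by
    refine Prod.ext (map_smul ..) ?_
    simp only [wact, Prod.smul_fst, Prod.smul_snd, map_smul, real_inner_smul_left,
      RingHom.id_apply, smul_eq_mul]
    ring

/-- The fields say that `w` is an isometry permuting the affine roots. Elements of `W` have this
property (`isRootSymm_of_mem_W`), and it is all that the length theory needs. -/
structure IsRootSymm (D : Data E) (w : E ≃ᵃ[ℝ] E) : Prop where
  inner_linear : ∀ x y : E, ⟪w.linear x, w.linear y⟫_ℝ = ⟪x, y⟫_ℝ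
  linear_mem : ∀ β ∈ D.Φ0, w.linear β ∈ D.Φ0
  inner_apply_zero : ∀ β ∈ D.Φ0, ∃ n : ℤ, ⟪β, w 0⟫_ℝ = n

namespace IsRootSymm

variable {D : Data E} {u w : E ≃ᵃ[ℝ] E}

lemma exists_linear_eq (hw : IsRootSymm D w) {β : E} (hβ : β ∈ D.Φ0) :
    ∃ γ ∈ D.Φ0, w.linear γ = β :=
  Finset.surjOn_of_injOn_of_card_le _ hw.linear_mem w.linear.injective.injOn le_rfl hβ

lemma one : IsRootSymm D 1 :=
  ⟨fun _ _ => rfl, fun _ hβ => hβ, fun _ _ => ⟨0, by simp⟩⟩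

lemma mul (hu : IsRootSymm D u) (hw : IsRootSymm D w) : IsRootSymm D (u * w) := by
  refine ⟨fun x y => (hu.inner_linear _ _).trans (hw.inner_linear x y),
    fun β hβ => hu.linear_mem _ (hw.linear_mem β hβ), fun β hβ => ?_⟩
  obtain ⟨γ, hγ, rfl⟩ := hu.exists_linear_eq hβ
  obtain ⟨n, hn⟩ := hw.inner_apply_zero γ hγ
  obtain ⟨m, hm⟩ := hu.inner_apply_zero _ hβ
  refine ⟨n + m, ?_⟩
  rw [AffineEquiv.coe_mul, Function.comp_apply, apply_eq_linear_add_apply_zero u,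
    inner_add_right, hu.inner_linear, hn, hm, Int.cast_add]

lemma inv (hw : IsRootSymm D w) : IsRootSymm D w⁻¹ := by
  have hinner (x y : E) : ⟪w⁻¹.linear x, w⁻¹.linear y⟫_ℝ = ⟪x, y⟫_ℝ := by
    rw [← hw.inner_linear]
    simp [AffineEquiv.inv_def]
  refine ⟨hinner, fun β hβ => ?_, fun β hβ => ?_⟩
  · obtain ⟨γ, hγ, rfl⟩ := hw.exists_linear_eq hβ
    simpa [AffineEquiv.inv_def] using hγ
  · have hlin : w.linear (w⁻¹ 0) = -w 0 := by
      rw [eq_neg_iff_add_eq_zero, ← apply_eq_linear_add_apply_zero]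
      exact w.apply_symm_apply 0
    obtain ⟨n, hn⟩ := hw.inner_apply_zero _ (hw.linear_mem β hβ)
    refine ⟨-n, ?_⟩
    rw [← hw.inner_linear, hlin, inner_neg_right, hn, Int.cast_neg]

end IsRootSymm

variable {D : Data E}

lemma Data.IsAffRoot.ne_zero {a : E × ℝ} (ha : D.IsAffRoot a) : a.1 ≠ 0 :=
  D.root_ne_zero _ ha.1

lemma isRootSymm_aRefl {a : E × ℝ} (ha : D.IsAffRoot a) : IsRootSymm D (aRefl a.1 a.2) := by
  have hα0 := ha.ne_zero
  obtain ⟨hα, l, hl⟩ := ha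
  refine ⟨inner_aRefl_linear hα0 a.2, fun β hβ => ?_, fun β hβ => ?_⟩
  · have h := D.root_refl_mem _ hα β hβ
    rwa [aRefl_apply hα0, add_zero, ← aRefl_linear_apply hα0 a.2] at h
  · obtain ⟨n, hn⟩ := D.root_crystal β hβ _ hα
    refine ⟨-(l * n), ?_⟩
    rw [aRefl_apply hα0, inner_zero_right, zero_add, zero_sub, inner_neg_right,
      real_inner_smul_right, real_inner_comm, hn, hl]
    push_cast
    ring

lemma inner_int_of_mem_Qv {μ : E} (hμ : μ ∈ D.Qv) {β : E} (hβ : β ∈ D.Φ0) :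
    ∃ n : ℤ, ⟪β, μ⟫_ℝ = n := by
  induction hμ using AddSubgroup.closure_induction with
  | mem x hx =>
    obtain ⟨γ, hγ, rfl⟩ := hx
    obtain ⟨n, hn⟩ := D.root_crystal β hβ γ hγ
    exact ⟨n, by rw [real_inner_comm, hn]⟩
  | zero => exact ⟨0, by simp⟩
  | add x y _ _ hx hy =>
    obtain ⟨n, hn⟩ := hx
    obtain ⟨m, hm⟩ := hy
    exact ⟨n + m, by rw [inner_add_right, hn, hm, Int.cast_add]⟩
  | neg x _ hx =>
    obtain ⟨n, hn⟩ := hx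
    exact ⟨-n, by rw [inner_neg_right, hn, Int.cast_neg]⟩

lemma isRootSymm_tr {μ : E} (hμ : μ ∈ D.Qv) : IsRootSymm D (tr μ) :=
  ⟨fun _ _ => rfl, fun _ hβ => hβ, fun _ hβ => by
    simpa [tr] using inner_int_of_mem_Qv hμ hβ⟩

lemma isRootSymm_of_mem_W {w : E ≃ᵃ[ℝ] E} (hw : w ∈ D.W) : IsRootSymm D w := by
  induction hw using Subgroup.closure_induction with
  | mem x hx =>
    rcases hx with ⟨α, hα, rfl⟩ | ⟨μ, hμ, rfl⟩
    · exact isRootSymm_aRefl (a := (α, 0)) ⟨hα, 0, by simp⟩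
    · exact isRootSymm_tr hμ
  | one => exact .one
  | mul _ _ _ _ hx hy => exact hx.mul hy
  | inv _ _ hx => exact hx.inv

section Action

variable {u w : E ≃ᵃ[ℝ] E}

lemma wact_mul (hu : IsRootSymm D u) (hw : IsRootSymm D w) (a : E × ℝ) :
    wact (u * w) a = wact u (wact w a) :=
  aval_injective <| funext fun y => by
    rw [aval_wact (hu.mul hw).inner_linear, aval_wact hu.inner_linear,
      aval_wact hw.inner_linear, mul_inv_rev, AffineEquiv.coe_mul, Function.comp_apply]

lemma wact_one (a : E × ℝ) : wact 1 a = a :=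
  Prod.ext rfl (by simp [wact])

lemma wact_inv_wact (hw : IsRootSymm D w) (a : E × ℝ) : wact w⁻¹ (wact w a) = a := by
  rw [← wact_mul hw.inv hw, inv_mul_cancel, wact_one]

lemma wact_wact_inv (hw : IsRootSymm D w) (a : E × ℝ) : wact w (wact w⁻¹ a) = a := by
  rw [← wact_mul hw hw.inv, mul_inv_cancel, wact_one]

lemma mul_aRefl_mul_inv (hw : IsRootSymm D w) {a : E × ℝ} (ha : a.1 ≠ 0) :
    w * aRefl a.1 a.2 * w⁻¹ = aRefl (wact w a).1 (wact w a).2 := by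
  have hwa : w.linear a.1 ≠ 0 := (map_ne_zero_iff _ w.linear.injective).2 ha
  have hcv : w.linear (cv a.1) = cv (w.linear a.1) := by
    rw [cv, cv, hw.inner_linear, map_smul]
  ext y
  have hval := aval_wact hw.inner_linear a y
  simp only [aval, wact] at hval
  simp only [AffineEquiv.coe_mul, Function.comp_apply, wact]
  have hy : w.linear (w⁻¹ y) + w 0 = y := by
    rw [← apply_eq_linear_add_apply_zero]
    exact w.apply_symm_apply y
  rw [aRefl_apply ha, aRefl_apply hwa, ← hval, apply_eq_linear_add_apply_zero w, map_sub,
    map_smul, hcv]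
  linear_combination (norm := module) hy

lemma Data.IsAffRoot.wact (hw : IsRootSymm D w) {a : E × ℝ} (ha : D.IsAffRoot a) :
    D.IsAffRoot (wact w a) := by
  obtain ⟨hα, n, hn⟩ := ha
  obtain ⟨m, hm⟩ := hw.inner_apply_zero _ (hw.linear_mem _ hα)
  exact ⟨hw.linear_mem _ hα, n - m, by simp only [SSV.wact, hn, hm, Int.cast_sub]⟩

end Action

section PositiveRoots

variable {a : E × ℝ}

lemma Data.IsAffRoot.neg (ha : D.IsAffRoot a) : D.IsAffRoot (-a) := by
  obtain ⟨hα, n, hn⟩ := ha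
  exact ⟨D.root_neg_mem _ hα, -n, by rw [Prod.snd_neg, hn, Int.cast_neg]⟩

lemma Data.IsPosAff.not_neg (ha : D.IsPosAff a) : ¬D.IsPosAff (-a) := by
  rintro ⟨-, hneg⟩
  obtain ⟨⟨hα, -⟩, hpos⟩ := ha
  rw [Prod.snd_neg, Prod.fst_neg, neg_pos, neg_eq_zero] at hneg
  rcases hpos with h | ⟨h0, hmem⟩
  · rcases hneg with h' | ⟨h', -⟩ <;> linarith
  · rcases hneg with h' | ⟨-, hmem'⟩
    · linarith
    · rcases D.pos_dichotomy _ hα with ⟨-, h⟩ | ⟨h, -⟩ <;> contradiction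

lemma Data.IsAffRoot.isPosAff_or_neg (ha : D.IsAffRoot a) : D.IsPosAff a ∨ D.IsPosAff (-a) := by
  obtain ⟨hα, n, hn⟩ := id ha
  rcases lt_trichotomy n 0 with h | rfl | h
  · exact Or.inr ⟨ha.neg, Or.inl (by rw [Prod.snd_neg, hn, neg_pos]; exact_mod_cast h)⟩
  · rcases D.pos_dichotomy _ hα with ⟨hmem, -⟩ | ⟨-, hmem⟩
    · exact Or.inl ⟨ha, Or.inr ⟨by simpa using hn, hmem⟩⟩
    · exact Or.inr ⟨ha.neg, Or.inr ⟨by simp [hn], hmem⟩⟩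
  · exact Or.inl ⟨ha, Or.inl (by rw [hn]; exact_mod_cast h)⟩

lemma Data.IsAffRoot.not_isPosAff_iff (ha : D.IsAffRoot a) : ¬D.IsPosAff a ↔ D.IsPosAff (-a) :=
  ⟨ha.isPosAff_or_neg.resolve_left, fun h h' => h'.not_neg h⟩

lemma isAffRoot_asimple (j : Fin (D.r + 1)) : D.IsAffRoot (D.asimple j) := by
  cases j using Fin.cases with
  | zero => exact ⟨D.root_neg_mem _ (D.pos_subset D.hroot_mem_pos), 1, by simp [Data.asimple]⟩
  | succ i => exact ⟨D.pos_subset (D.simple_mem_pos i), 0, by simp [Data.asimple]⟩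

lemma isPosAff_asimple (j : Fin (D.r + 1)) : D.IsPosAff (D.asimple j) := by
  refine ⟨isAffRoot_asimple j, ?_⟩
  cases j using Fin.cases with
  | zero => exact Or.inl (by simp [Data.asimple])
  | succ i =>
    exact Or.inr ⟨by simp [Data.asimple], by simpa [Data.asimple] using D.simple_mem_pos i⟩

lemma sum_smul_asimple (n : Fin (D.r + 1) → ℝ) :
    ∑ t, n t • D.asimple t = (n 0 • -D.hroot + ∑ i, n i.succ • D.simple i, n 0) := by
  ext <;> simp [Fin.sum_univ_succ, Data.asimple, Prod.fst_sum, Prod.snd_sum]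

lemma linearIndependent_asimple : LinearIndependent ℝ D.asimple := by
  rw [Fintype.linearIndependent_iff]
  intro n hn
  rw [sum_smul_asimple, Prod.mk_eq_zero] at hn
  obtain ⟨h1, h0⟩ := hn
  rw [h0, zero_smul, zero_add] at h1
  intro t
  cases t using Fin.cases with
  | zero => exact h0
  | succ i => exact Fintype.linearIndependent_iff.1 D.simple_indep _ h1 i

lemma Data.IsPosAff.exists_nat_combo (ha : D.IsPosAff a) :
    ∃ n : Fin (D.r + 1) → ℕ, a = ∑ t, (n t : ℝ) • D.asimple t := by
  obtain ⟨⟨hα, l, hl⟩, hpos⟩ := ha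
  simp only [sum_smul_asimple]
  rcases hpos with hpos | ⟨h0, hmem⟩
  · have hl0 : 0 < l := by exact_mod_cast hl ▸ hpos
    obtain ⟨K, rfl⟩ : ∃ K : ℕ, l = K + 1 := ⟨(l - 1).toNat, by omega⟩
    -- `a = (K + 1) α_0 + (φ + a.1) + K φ`, and both `φ` and `φ + a.1 = φ - (-a.1)` are
    -- `ℕ`-combinations of the simple roots.
    obtain ⟨p, hp⟩ := D.hroot_highest _ (D.root_neg_mem _ hα)
    obtain ⟨q, hq⟩ := D.pos_nat_comb _ D.hroot_mem_pos
    refine ⟨Fin.cases (K + 1) fun i => p i + K * q i, Prod.ext ?_ ?_⟩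
    · simp only [Fin.cases_zero, Fin.cases_succ, Nat.cast_add, Nat.cast_mul, add_smul, mul_smul,
        Finset.sum_add_distrib, ← Finset.smul_sum, ← hp, ← hq]
      module
    · simp [hl]
  · obtain ⟨p, hp⟩ := D.pos_nat_comb _ hmem
    exact ⟨Fin.cases 0 p, Prod.ext (by simpa using hp) (by simpa using h0)⟩

lemma isPosAff_of_nat_combo (ha : D.IsAffRoot a) (n : Fin (D.r + 1) → ℕ)
    (hn : a = ∑ t, (n t : ℝ) • D.asimple t) : D.IsPosAff a := by
  by_contra hneg
  obtain ⟨m, hm⟩ := (ha.not_isPosAff_iff.1 hneg).exists_nat_combo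
  have hsum : ∑ t, ((n t : ℝ) + m t) • D.asimple t = ∑ t, (0 : ℝ) • D.asimple t := by
    simp only [add_smul, Finset.sum_add_distrib, ← hn, ← hm, zero_smul, Finset.sum_const_zero,
      add_neg_cancel]
  have hn0 (t : Fin (D.r + 1)) : n t = 0 := by
    have := Fintype.linearIndependent_iffₛ.1 linearIndependent_asimple _ _ hsum t
    norm_cast at this
    omega
  exact ha.ne_zero (by simp [hn, hn0])

end PositiveRoots

section SimpleReflections

variable {a : E × ℝ} (j : Fin (D.r + 1))

lemma isRootSymm_sgen : IsRootSymm D (D.sgen j) :=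
  isRootSymm_aRefl (isAffRoot_asimple j)

lemma sgen_mul_self : D.sgen j * D.sgen j = 1 :=
  aRefl_mul_self (isAffRoot_asimple j).ne_zero _

lemma wact_sgen (a : E × ℝ) :
    wact (D.sgen j) a = a - ⟪cv (D.asimple j).1, a.1⟫_ℝ • D.asimple j := by
  have hα := (isAffRoot_asimple j).ne_zero
  refine aval_injective (funext fun y => ?_)
  rw [aval_wact (isRootSymm_sgen j).inner_linear, Data.sgen, aRefl_inv hα, aRefl_apply hα]
  simp only [aval, Prod.fst_sub, Prod.snd_sub, Prod.smul_fst, Prod.smul_snd, inner_sub_left,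
    inner_sub_right, real_inner_smul_left, real_inner_smul_right, smul_eq_mul,
    real_inner_comm a.1 (cv _)]
  ring

lemma wact_sgen_asimple : wact (D.sgen j) (D.asimple j) = -D.asimple j := by
  rw [wact_sgen, real_inner_comm, inner_cv_self (isAffRoot_asimple j).ne_zero]
  module

lemma wact_sgen_wact_sgen (a : E × ℝ) : wact (D.sgen j) (wact (D.sgen j) a) = a := by
  rw [← wact_mul (isRootSymm_sgen j) (isRootSymm_sgen j), sgen_mul_self, wact_one]

lemma isPosAff_wact_sgen (ha : D.IsPosAff a) (hne : a ≠ D.asimple j) :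
    D.IsPosAff (wact (D.sgen j) a) := by
  by_contra hneg
  obtain ⟨n, hn⟩ := ha.exists_nat_combo
  obtain ⟨m, hm⟩ := ((ha.1.wact (isRootSymm_sgen j)).not_isPosAff_iff.1 hneg).exists_nat_combo
  set k := ⟪cv (D.asimple j).1, a.1⟫_ℝ
  -- `a - s_j a = k α_j` while both `a` and `-s_j a` have nonnegative coordinates
  have hsum : ∑ t, ((n t : ℝ) + m t) • D.asimple t =
      ∑ t, (Pi.single j k : Fin (D.r + 1) → ℝ) t • D.asimple t := by
    simp only [add_smul, Finset.sum_add_distrib, ← hn, ← hm, wact_sgen, Pi.single_apply, ite_smul,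
      zero_smul, Finset.sum_ite_eq', Finset.mem_univ, if_true]
    abel
  have hn0 (t : Fin (D.r + 1)) (ht : t ≠ j) : n t = 0 := by
    have := Fintype.linearIndependent_iffₛ.1 linearIndependent_asimple _ _ hsum t
    rw [Pi.single_apply, if_neg ht] at this
    norm_cast at this
    omega
  have haj : a = (n j : ℝ) • D.asimple j := by
    rw [hn, Finset.sum_eq_single j (fun t _ ht => by rw [hn0 t ht, Nat.cast_zero, zero_smul])
      (by simp)]
  have hmem : (n j : ℝ) • (D.asimple j).1 ∈ D.Φ0 := by
    rw [← Prod.smul_fst, ← haj]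
    exact ha.1.1
  rcases D.root_reduced _ (isAffRoot_asimple j).1 _ hmem with h | h
  · exact hne (by rw [haj, h, one_smul])
  · have : (0 : ℝ) ≤ n j := Nat.cast_nonneg _
    linarith

end SimpleReflections

section Length

variable {w : E ≃ᵃ[ℝ] E} {a b : E × ℝ}

lemma piSet_finite (hw : IsRootSymm D w) : (D.PiSet w).Finite := by
  -- `(α, l) ∈ Π(w)` forces `0 ≤ l ≤ ⟪w α, w 0⟫`
  have hne : D.Φ0.Nonempty := ⟨_, D.pos_subset D.hroot_mem_pos⟩
  set M := D.Φ0.sup' hne fun γ => ⟪γ, w 0⟫_ℝ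
  refine (D.Φ0.finite_toSet.prod ((Set.finite_Icc 0 ⌊M⌋).image (Int.cast : ℤ → ℝ))).subset ?_
  rintro a ⟨⟨haff, hpos⟩, hneg⟩
  have hneg' := (haff.wact hw).not_isPosAff_iff.1 hneg
  obtain ⟨hα, l, hl⟩ := haff
  have h0 : (0 : ℝ) ≤ l := by
    rw [← hl]
    rcases hpos with h | ⟨h, -⟩ <;> linarith
  have hM : (l : ℝ) ≤ M := by
    refine le_trans ?_ (Finset.le_sup' (fun γ => ⟪γ, w 0⟫_ℝ) (hw.linear_mem _ hα))
    rw [← hl]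
    rcases hneg'.2 with h | ⟨h, -⟩ <;> simp only [wact, Prod.snd_neg] at h <;> linarith
  exact ⟨hα, l, ⟨by exact_mod_cast h0, Int.le_floor.2 hM⟩, hl.symm⟩

lemma piSet_mul_sgen (hw : IsRootSymm D w) (j : Fin (D.r + 1))
    (h : D.IsPosAff (wact w (D.asimple j))) :
    D.PiSet (w * D.sgen j) = insert (D.asimple j) (wact (D.sgen j) '' D.PiSet w) := by
  ext a
  simp only [Data.PiSet, Set.mem_insert_iff, Set.mem_image, Set.mem_ofPred_eq,
    wact_mul hw (isRootSymm_sgen j)]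
  constructor
  · rintro ⟨hpos, hneg⟩
    by_cases haj : a = D.asimple j
    · exact Or.inl haj
    · exact Or.inr ⟨_, ⟨isPosAff_wact_sgen j hpos haj, hneg⟩, wact_sgen_wact_sgen j a⟩
  · rintro (rfl | ⟨b, ⟨hbpos, hbneg⟩, rfl⟩)
    · rw [wact_sgen_asimple, wact_neg]
      exact ⟨isPosAff_asimple j, h.not_neg⟩
    · have hbj : b ≠ D.asimple j := by
        rintro rfl
        exact hbneg h
      exact ⟨isPosAff_wact_sgen j hbpos hbj, by rwa [wact_sgen_wact_sgen]⟩

lemma len_mul_sgen_of_isPosAff (hw : IsRootSymm D w) (j : Fin (D.r + 1))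
    (h : D.IsPosAff (wact w (D.asimple j))) : D.len (w * D.sgen j) = D.len w + 1 := by
  have hnot : D.asimple j ∉ wact (D.sgen j) '' D.PiSet w := by
    rintro ⟨b, ⟨hbpos, -⟩, hb⟩
    rw [← wact_sgen_wact_sgen j b, hb, wact_sgen_asimple] at hbpos
    exact (isPosAff_asimple j).not_neg hbpos
  rw [Data.len, piSet_mul_sgen hw j h, Set.ncard_insert_of_notMem hnot ((piSet_finite hw).image _),
    Set.ncard_image_of_injective _ (Function.LeftInverse.injective (wact_sgen_wact_sgen j))]
  rfl

lemma len_mul_sgen_of_not_isPosAff (hw : IsRootSymm D w) (j : Fin (D.r + 1))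
    (h : ¬D.IsPosAff (wact w (D.asimple j))) : D.len w = D.len (w * D.sgen j) + 1 := by
  have hpos : D.IsPosAff (wact (w * D.sgen j) (D.asimple j)) := by
    rw [wact_mul hw (isRootSymm_sgen j), wact_sgen_asimple, wact_neg]
    exact (((isAffRoot_asimple j).wact hw).not_isPosAff_iff).1 h
  have := len_mul_sgen_of_isPosAff (hw.mul (isRootSymm_sgen j)) j hpos
  rwa [mul_assoc, sgen_mul_self, mul_one] at this

lemma len_le_len_mul_sgen_add_one (hw : IsRootSymm D w) (j : Fin (D.r + 1)) :
    D.len w ≤ D.len (w * D.sgen j) + 1 := by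
  by_cases h : D.IsPosAff (wact w (D.asimple j))
  · rw [len_mul_sgen_of_isPosAff hw j h]
    omega
  · exact (len_mul_sgen_of_not_isPosAff hw j h).le

lemma len_inv (hw : IsRootSymm D w) : D.len w⁻¹ = D.len w := by
  have hset : D.PiSet w⁻¹ = (fun a => -wact w a) '' D.PiSet w := by
    ext b
    constructor
    · rintro ⟨hbpos, hbneg⟩
      refine ⟨-wact w⁻¹ b, ⟨(hbpos.1.wact hw.inv).not_isPosAff_iff.1 hbneg, ?_⟩, ?_⟩
      · rw [wact_neg, wact_wact_inv hw]
        exact hbpos.not_neg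
      · simp only [wact_neg, wact_wact_inv hw, neg_neg]
    · rintro ⟨a, ⟨hapos, haneg⟩, rfl⟩
      refine ⟨(hapos.1.wact hw).not_isPosAff_iff.1 haneg, ?_⟩
      rw [wact_neg, wact_inv_wact hw]
      exact hapos.not_neg
  have hinj : Function.Injective fun a => -wact w a := fun a b hab => by
    simpa [wact_inv_wact hw] using congrArg (fun x => wact w⁻¹ (-x)) hab
  rw [Data.len, Data.len, hset, Set.ncard_image_of_injective _ hinj]

lemma exists_not_isPosAff_wact_asimple (hw : IsRootSymm D w) (ha : a ∈ D.PiSet w) :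
    ∃ j, ¬D.IsPosAff (wact w (D.asimple j)) := by
  by_contra! hall
  obtain ⟨hpos, hneg⟩ := ha
  obtain ⟨n, hn⟩ := hpos.exists_nat_combo
  choose m hm using fun t => (hall t).exists_nat_combo
  refine hneg (isPosAff_of_nat_combo (hpos.1.wact hw) (fun s => ∑ t, n t * m t s) ?_)
  change wactLinear w a = _
  simp only [hn, map_sum, map_smul, wactLinear, LinearMap.coe_mk, AddHom.coe_mk, hm,
    Finset.smul_sum, smul_smul, Nat.cast_sum, Nat.cast_mul, Finset.sum_smul]
  exact Finset.sum_comm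

lemma len_mul_aRefl_lt (hw : IsRootSymm D w) (hb : D.IsPosAff b)
    (hwb : ¬D.IsPosAff (wact w b)) : D.len (w * aRefl b.1 b.2) < D.len w := by
  induction hN : D.len w using Nat.strong_induction_on generalizing w b with
  | _ N ih =>
  obtain ⟨j, hj⟩ := exists_not_isPosAff_wact_asimple hw ⟨hb, hwb⟩
  have hlen := len_mul_sgen_of_not_isPosAff hw j hj
  by_cases hbj : b = D.asimple j
  · subst hbj
    change D.len (w * D.sgen j) < N
    omega
  -- otherwise induct on `w s_j`, which sends the positive root `s_j b` to `w b`
  have hwb' : ¬D.IsPosAff (wact (w * D.sgen j) (wact (D.sgen j) b)) := by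
    rwa [wact_mul hw (isRootSymm_sgen j), wact_sgen_wact_sgen]
  have ih' := ih _ (by omega) (hw.mul (isRootSymm_sgen j)) (isPosAff_wact_sgen j hb hbj) hwb' rfl
  have hconj : w * D.sgen j * aRefl (wact (D.sgen j) b).1 (wact (D.sgen j) b).2 =
      w * aRefl b.1 b.2 * D.sgen j := by
    rw [← mul_aRefl_mul_inv (isRootSymm_sgen j) hb.1.ne_zero,
      inv_eq_of_mul_eq_one_right (sgen_mul_self j), mul_assoc w, ← mul_assoc (D.sgen j),
      ← mul_assoc (D.sgen j), sgen_mul_self, one_mul, mul_assoc]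
  have hle := len_le_len_mul_sgen_add_one (hw.mul (isRootSymm_aRefl hb.1)) j
  rw [← hconj] at hle
  omega

lemma isPosAff_wact_inv_of_len_lt (hw : IsRootSymm D w) (hb : D.IsPosAff b)
    (hlen : D.len w < D.len (aRefl b.1 b.2 * w)) : D.IsPosAff (wact w⁻¹ b) := by
  by_contra h
  have hlt := len_mul_aRefl_lt hw.inv hb h
  have hinv : (w⁻¹ * aRefl b.1 b.2)⁻¹ = aRefl b.1 b.2 * w := by
    rw [mul_inv_rev, inv_inv, aRefl_inv hb.1.ne_zero]
  rw [← len_inv (hw.inv.mul (isRootSymm_aRefl hb.1)), hinv, len_inv hw] at hlt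
  omega

end Length

section Order

variable {b : E × ℝ} {c y : E}

lemma aval_nonneg_of_mem_Cbar (hb : D.IsPosAff b) (hc : c ∈ D.Cbar) : 0 ≤ aval b c := by
  have hcont : Continuous (aval b) := (continuous_const.inner continuous_id).add continuous_const
  refine closure_minimal (fun y hy => ?_) (isClosed_le continuous_const hcont) hc
  obtain ⟨⟨hα, l, hl⟩, hpos⟩ := hb
  simp only [Set.mem_ofPred_eq, aval]
  rcases hpos with hpos | ⟨h0, hmem⟩
  · have hl0 : 0 < l := by exact_mod_cast hl ▸ hpos
    have hl1 : (1 : ℝ) ≤ b.2 := by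
      rw [hl]
      exact_mod_cast hl0
    rcases D.pos_dichotomy _ hα with ⟨hmem, -⟩ | ⟨-, hmem⟩
    · linarith [(hy _ hmem).1]
    · linarith [(hy _ hmem).2, inner_neg_left (𝕜 := ℝ) b.1 y]
  · linarith [(hy _ hmem).1]

lemma prec_aRefl_apply (hb : D.IsPosAff b) (hA : 0 < aval b y) :
    D.prec y (aRefl b.1 b.2 y) := by
  obtain ⟨⟨hα, l, hl⟩, hpos⟩ := hb
  have hα0 := D.root_ne_zero _ hα
  have hy : y = aRefl b.1 b.2 (aRefl b.1 b.2 y) := (aRefl_aRefl hα0 _ _).symm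
  have hinner : ⟪b.1, aRefl b.1 b.2 y⟫_ℝ = -⟪b.1, y⟫_ℝ - 2 * b.2 := by
    rw [aRefl_apply hα0, inner_sub_right, real_inner_smul_right, inner_cv_self hα0]
    ring
  simp only [aval] at hA
  rcases hpos with hpos | ⟨h0, hmem⟩
  · have habs : |⟪b.1, y⟫_ℝ| < |⟪b.1, aRefl b.1 b.2 y⟫_ℝ| := by
      have h2 : |-⟪b.1, y⟫_ℝ - 2 * b.2| = ⟪b.1, y⟫_ℝ + 2 * b.2 := by
        rw [abs_of_neg (by linarith)]
        ring
      rw [hinner, h2, abs_lt]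
      constructor <;> linarith
    rcases D.pos_dichotomy _ hα with ⟨hmem, -⟩ | ⟨-, hmem⟩
    · exact .single ⟨b.1, hmem, ⟨l, hl ▸ hy⟩, Or.inl habs⟩
    · refine .single ⟨-b.1, hmem, ⟨-l, ?_⟩, Or.inl (by simpa only [inner_neg_left, abs_neg])⟩
      rwa [Int.cast_neg, ← hl, aRefl_neg hα0]
  · refine .single ⟨b.1, hmem, ⟨0, ?_⟩, Or.inr ⟨?_, ?_⟩⟩
    · rwa [Int.cast_zero, ← h0]
    · rw [hinner, h0]
      ring
    · linarith

lemma precLE_aRefl_apply (hb : D.IsPosAff b) (hA : 0 ≤ aval b y) :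
    D.precLE y (aRefl b.1 b.2 y) := by
  rcases hA.lt_or_eq with hA | hA
  · exact Or.inl (prec_aRefl_apply hb hA)
  · right
    rw [aRefl_apply hb.1.ne_zero]
    change y = y - aval b y • cv b.1
    rw [← hA, zero_smul, sub_zero]

lemma precLE_trans {x z : E} (hxy : D.precLE x y) (hyz : D.precLE y z) : D.precLE x z := by
  rcases hxy with hxy | rfl
  · rcases hyz with hyz | rfl
    · exact Or.inl (hxy.trans hyz)
    · exact Or.inl hxy
  · exact hyz

variable {g u v : E ≃ᵃ[ℝ] E}

lemma Data.IsCoxRefl.exists_isPosAff (hg : D.IsCoxRefl g) :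
    ∃ b, D.IsPosAff b ∧ g = aRefl b.1 b.2 := by
  obtain ⟨w, hw, j, rfl⟩ := hg
  have hw := isRootSymm_of_mem_W hw
  have hroot := (isAffRoot_asimple j).wact hw
  have hconj : w * D.sgen j * w⁻¹ = _ := mul_aRefl_mul_inv hw (isAffRoot_asimple j).ne_zero
  rcases hroot.isPosAff_or_neg with h | h
  · exact ⟨_, h, hconj⟩
  · exact ⟨_, h, by rw [hconj, Prod.fst_neg, Prod.snd_neg, aRefl_neg hroot.ne_zero]⟩

lemma Data.IsCoxRefl.isRootSymm (hg : D.IsCoxRefl g) : IsRootSymm D g := by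
  obtain ⟨b, hb, rfl⟩ := hg.exists_isPosAff
  exact isRootSymm_aRefl hb.1

lemma IsRootSymm.of_bruhatLE (hu : IsRootSymm D u) (h : D.bruhatLE u v) : IsRootSymm D v := by
  induction h with
  | refl => exact hu
  | tail _ hstep ih =>
    obtain ⟨⟨g, hg, rfl⟩, -⟩ := hstep
    exact hg.isRootSymm.mul ih

lemma precLE_of_bstep (hu : IsRootSymm D u) (h : D.bstep u v) (hc : c ∈ D.Cbar) :
    D.precLE (u c) (v c) := by
  obtain ⟨⟨g, hg, rfl⟩, hlen⟩ := h
  obtain ⟨b, hb, rfl⟩ := hg.exists_isPosAff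
  have hA := aval_nonneg_of_mem_Cbar (isPosAff_wact_inv_of_len_lt hu hb hlen) hc
  rw [aval_wact hu.inv.inner_linear, inv_inv] at hA
  exact precLE_aRefl_apply hb hA

lemma precLE_of_bruhatLE (hu : IsRootSymm D u) (h : D.bruhatLE u v) (hc : c ∈ D.Cbar) :
    D.precLE (u c) (v c) := by
  induction h with
  | refl => exact Or.inr rfl
  | tail huv hstep ih => exact precLE_trans ih (precLE_of_bstep (hu.of_bruhatLE huv) hstep hc)

end Order

end SSV

theorem statement9_general
    {E : Type*} [NormedAddCommGroup E] [InnerProductSpace ℝ E]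
    (D : SSV.Data E) (w w' : E ≃ᵃ[ℝ] E) (hw : w ∈ D.W)
    (hB : D.bruhatLE w w') (c : E) (hc : c ∈ D.Cbar) :
    D.precLE (w c) (w' c) :=
  SSV.precLE_of_bruhatLE (SSV.isRootSymm_of_mem_W hw) hB hc

/-- if `w ≤_B w′` in `W` then `w·c ⪯ w′·c` for every `c ∈ C̄₊`. -/
theorem statement9
    {E : Type*} [NormedAddCommGroup E] [InnerProductSpace ℝ E] [FiniteDimensional ℝ E]
    (D : SSV.Data E) (w w' : E ≃ᵃ[ℝ] E) (hw : w ∈ D.W) (hw' : w' ∈ D.W)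
    (hB : D.bruhatLE w w') (c : E) (hc : c ∈ D.Cbar) :
    D.precLE (w c) (w' c) :=
  statement9_general D w w' hw hB c hc
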